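/- arXiv:nlin/0307020 — 3 statements merged into one kernel-verified Lean document; each statement's English description precedes it below -/
import Mathlib

section
/- For every n with 1 ≤ n ≤ D+1, φⁿ(c_D) = Xₙ u_{n-1}⁻¹ Xₙ⁻¹, where Xₙ = F⁻¹ u₀ c₁ u₁ c₂ ⋯ u_{n-2} c_{n-1} (with X₁ = F⁻¹). In particular, φⁿ(c_D) is conjugate to u_{n-1}⁻¹ for 1 ≤ n ≤ D+1. -/
abbrev G : Type := FreeGroup (ℤ ⊕ ℤ)

/-- generator cₙ -/
def c (n : ℤ) : G := FreeGroup.of (Sum.inl n)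
/-- generator uₙ -/
def u (n : ℤ) : G := FreeGroup.of (Sum.inr n)

/-- F = c₁ c₂ ⋯ c_D -/
def F (D : ℕ) : G := ((List.range D).map (fun i => c ((i : ℤ) + 1))).prod

/-- the tangle endomorphism for minimum delay time D -/
def φ (D : ℕ) : G →* G := FreeGroup.lift fun x =>
  match x with
  | Sum.inl n => if n = (D : ℤ) then (F D)⁻¹ * (u 0)⁻¹ * F D else c (n + 1)
  | Sum.inr n => u (n + 1)

/-- X_n = F⁻¹ u₀ c₁ u₁ c₂ ⋯ u_{n-2} c_{n-1} -/
def X (D n : ℕ) : G :=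
  (F D)⁻¹ * ((List.range (n - 1)).map (fun i => u i * c ((i : ℤ) + 1))).prod


/-!
The letter `c_D` is the only one `φ` does not shift, so `φ(F) = c₁⁻¹ u₀⁻¹ F`, i.e. `φ(F⁻¹) = F⁻¹ u₀ c₁`.
The letters `c₁, …, c_{n-1}` of `X_n` are shifted as long as `n ≤ D`, hence `φ(X_n) = X_{n+1}`, and
induction from `φ(c_D) = X₁ u₀⁻¹ X₁⁻¹` gives `φⁿ(c_D) = X_n u_{n-1}⁻¹ X_n⁻¹` up to `n = D + 1`.
-/

lemma F_eq_prod (D : ℕ) : F D = ((List.range D).map fun i : ℕ ↦ c (i + 1)).prod := by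
  simp [F, ← List.map_eq_flatMap, Function.comp_def]

def ucWord (k : ℕ) : G := ((List.range k).map fun i : ℕ ↦ u i * c (i + 1)).prod

lemma X_eq (D n : ℕ) : X D n = (F D)⁻¹ * ucWord (n - 1) := by
  simp [X, ucWord, ← List.map_eq_flatMap, Function.comp_def]

lemma ucWord_succ (k : ℕ) :
    ucWord (k + 1) = u 0 * c 1 * ((List.range k).map fun i : ℕ ↦ u (i + 1) * c (i + 2)).prod := by
  simp only [ucWord, List.prod_range_succ', Nat.cast_zero, zero_add, Nat.cast_succ, add_assoc,
    one_add_one_eq_two]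

section φ

variable {D : ℕ}

lemma φ_u (m : ℤ) : φ D (u m) = u (m + 1) := by
  simp [φ, u]

lemma φ_c_of_ne {m : ℤ} (h : m ≠ D) : φ D (c m) = c (m + 1) := by
  simp [φ, c, h]

lemma φ_c_self : φ D (c D) = (F D)⁻¹ * (u 0)⁻¹ * F D := by
  simp [φ, c]

lemma φ_F (hD : 1 ≤ D) : φ D (F D) = (c 1)⁻¹ * (u 0)⁻¹ * F D := by
  obtain ⟨d, rfl⟩ : ∃ d, D = d + 1 := ⟨D - 1, by omega⟩
  have shift : φ (d + 1) ((List.range d).map fun i : ℕ ↦ c (i + 1)).prod =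
      ((List.range d).map fun i : ℕ ↦ c (i + 2)).prod := by
    rw [map_list_prod, List.map_map]
    refine congrArg List.prod (List.map_congr_left fun i hi ↦ ?_)
    rw [Function.comp_apply, φ_c_of_ne (by simp at hi; omega), add_assoc, one_add_one_eq_two]
  have hF_first : F (d + 1) = c 1 * ((List.range d).map fun i : ℕ ↦ c (i + 2)).prod := by
    simp only [F_eq_prod, List.prod_range_succ', Nat.cast_zero, zero_add, Nat.cast_succ, add_assoc,
      one_add_one_eq_two]
  have hF_last : F (d + 1) = ((List.range d).map fun i : ℕ ↦ c (i + 1)).prod * c (d + 1 : ℕ) := by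
    rw [F_eq_prod, List.prod_range_succ, Nat.cast_succ]
  rw [hF_last, map_mul, shift, φ_c_self, ← hF_last, hF_first]
  group

lemma φ_ucWord {k : ℕ} (hk : k < D) :
    φ D (ucWord k) = ((List.range k).map fun i : ℕ ↦ u (i + 1) * c (i + 2)).prod := by
  rw [ucWord, map_list_prod, List.map_map]
  refine congrArg List.prod (List.map_congr_left fun i hi ↦ ?_)
  rw [Function.comp_apply, map_mul, φ_u, φ_c_of_ne (by simp at hi; omega), add_assoc,
    one_add_one_eq_two]

lemma φ_X {n : ℕ} (hn1 : 1 ≤ n) (hn2 : n ≤ D) : φ D (X D n) = X D (n + 1) := by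
  obtain ⟨k, rfl⟩ : ∃ k, n = k + 1 := ⟨n - 1, by omega⟩
  rw [X_eq, X_eq, map_mul, map_inv, φ_F (by omega), Nat.add_sub_cancel, φ_ucWord (by omega),
    Nat.add_sub_cancel, ucWord_succ]
  group

lemma iterate_φ_c_self {n : ℕ} (hn1 : 1 ≤ n) (hn2 : n ≤ D + 1) :
    (⇑(φ D))^[n] (c D) = X D n * (u ((n : ℤ) - 1))⁻¹ * (X D n)⁻¹ := by
  induction n, hn1 using Nat.le_induction with
  | base => simp [φ_c_self, X_eq, ucWord]
  | succ n hn1 ih =>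
    rw [Function.iterate_succ_apply', ih (by omega), map_mul, map_mul, map_inv, map_inv, φ_u,
      φ_X hn1 (by omega)]
    rw [Nat.cast_succ, sub_add_cancel, add_sub_cancel_right]

end φ

theorem stmt_1_general (D : ℕ) (n : ℕ) (hn1 : 1 ≤ n) (hn2 : n ≤ D + 1) :
    (⇑(φ D))^[n] (c D) = X D n * (u ((n : ℤ) - 1))⁻¹ * (X D n)⁻¹ ∧
      IsConj ((u ((n : ℤ) - 1))⁻¹) ((⇑(φ D))^[n] (c D)) := by
  have h := iterate_φ_c_self hn1 hn2
  exact ⟨h, isConj_iff.mpr ⟨X D n, h.symm⟩⟩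

theorem stmt_1 (D : ℕ) (hD : 1 ≤ D) (n : ℕ) (hn1 : 1 ≤ n) (hn2 : n ≤ D + 1) :
    (⇑(φ D))^[n] (c D) = X D n * (u ((n : ℤ) - 1))⁻¹ * (X D n)⁻¹ ∧
      IsConj ((u ((n : ℤ) - 1))⁻¹) ((⇑(φ D))^[n] (c D)) :=
  stmt_1_general D n hn1 hn2
end

section
/- For D = 1 and every n ≥ 1, the number of occurrences of the letters u₀ and u₀⁻¹ in the reduced word of φⁿ(c₁) equals 2^{n-1}. -/
/-!
Write `wₙ = φⁿ(c₁)`. Since `φ(c₁) = c₁⁻¹ u₀⁻¹ c₁` and `φ` shifts the `u`'s,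
`wₙ₊₁ = wₙ⁻¹ uₙ⁻¹ wₙ`. The reduced word of `wₙ` begins and ends with a letter `c₁^{±1}`, so this
conjugation cancels nothing: the reduced word of `wₙ₊₁` is that of `wₙ⁻¹`, then `uₙ⁻¹`, then that
of `wₙ`. Hence the number of letters `u₀^{±1}` doubles at every step, except at the first, which
creates one.
-/

namespace FreeGroup

variable {α : Type*} {L : List (α × Bool)}

theorem IsReduced.cons_of_ne (h : IsReduced L) {a : α} (b : Bool)
    (ha : ∀ p ∈ L.head?, p.1 ≠ a) : IsReduced ((a, b) :: L) := by
  cases L with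
  | nil => exact .singleton
  | cons p L => exact isReduced_cons_cons.mpr ⟨fun hp => absurd hp.symm (ha p rfl), h⟩

theorem countP_invRev (p : α → Prop) [DecidablePred p] :
    (invRev L).countP (fun l => p l.1) = L.countP (fun l => p l.1) := by
  rw [invRev, List.countP_reverse, List.countP_map]
  rfl

variable [DecidableEq α]

theorem IsReduced.invRev (h : IsReduced L) : IsReduced (invRev L) := by
  rw [isReduced_iff_reduce_eq] at h ⊢
  rw [reduce_invRev, h]

theorem toWord_inv_mul_mk_mul {x : FreeGroup α} {a : α} (b : Bool)
    (ha : ∀ p ∈ x.toWord.head?, p.1 ≠ a) :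
    (x⁻¹ * mk [(a, b)] * x).toWord = invRev x.toWord ++ (a, b) :: x.toWord := by
  have hred : IsReduced (invRev x.toWord ++ [(a, b)] ++ x.toWord) := by
    refine IsReduced.append_overlap ?_ (isReduced_toWord.cons_of_ne b ha) (List.cons_ne_nil _ _)
    have h := (isReduced_toWord (x := x)).cons_of_ne (!b) ha |>.invRev
    have hab : invRev [(a, !b)] = [(a, b)] := by simp [invRev]
    rwa [invRev_cons, hab] at h
  calc (x⁻¹ * mk [(a, b)] * x).toWord
      = (mk (invRev x.toWord ++ [(a, b)] ++ x.toWord)).toWord := by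
        conv_lhs => rw [← mk_toWord (x := x), inv_mk, mul_mk, mul_mk]
    _ = invRev x.toWord ++ (a, b) :: x.toWord := by
        rw [toWord_mk, hred.reduce_eq, List.append_assoc, List.singleton_append]

theorem head?_toWord_inv_mul_mk_mul {x : FreeGroup α} {a : α} (b : Bool)
    (ha : ∀ p ∈ x.toWord.head?, p.1 ≠ a) {q : α × Bool}
    (hq : x⁻¹.toWord.head? = some q) :
    (x⁻¹ * mk [(a, b)] * x).toWord.head? = some q := by
  rw [toWord_inv_mul_mk_mul b ha, List.head?_append, ← toWord_inv, hq, Option.some_or]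

end FreeGroup

open FreeGroup

theorem φ_one_c_one : φ 1 (c 1) = (c 1)⁻¹ * (u 0)⁻¹ * c 1 := by
  simp [φ, c, F]

theorem iterate_φ_one_u (n : ℕ) (k : ℤ) : (⇑(φ 1))^[n] (u k) = u (k + n) := by
  induction n with
  | zero => simp
  | succ n ih =>
    rw [Function.iterate_succ_apply', ih]
    simp [φ, u, add_assoc]

theorem iterate_φ_one_c_one_succ (n : ℕ) :
    (⇑(φ 1))^[n + 1] (c 1) =
      ((⇑(φ 1))^[n] (c 1))⁻¹ * (u n)⁻¹ * (⇑(φ 1))^[n] (c 1) := by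
  rw [Function.iterate_succ_apply, φ_one_c_one, iterate_map_mul, iterate_map_mul,
    iterate_map_inv, iterate_map_inv, iterate_φ_one_u, zero_add]

theorem iterate_φ_one_c_one_succ_inv (n : ℕ) :
    ((⇑(φ 1))^[n + 1] (c 1))⁻¹ =
      ((⇑(φ 1))^[n] (c 1))⁻¹ * u n * (⇑(φ 1))^[n] (c 1) := by
  rw [iterate_φ_one_c_one_succ]
  group

theorem head?_toWord_iterate_φ_one_c_one (n : ℕ) :
    (∀ p ∈ ((⇑(φ 1))^[n] (c 1)).toWord.head?, p.1 = .inl 1) ∧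
      ∃ q ∈ ((⇑(φ 1))^[n] (c 1))⁻¹.toWord.head?, q.1 = .inl 1 := by
  induction n with
  | zero => exact ⟨by simp [c], _, rfl, rfl⟩
  | succ n ih =>
    obtain ⟨hw, q, hq, hq1⟩ := ih
    have ha : ∀ p ∈ ((⇑(φ 1))^[n] (c 1)).toWord.head?, p.1 ≠ .inr (n : ℤ) :=
      fun p hp => by simp [hw p hp]
    rw [iterate_φ_one_c_one_succ_inv, iterate_φ_one_c_one_succ,
      show (u n)⁻¹ = mk [(.inr (n : ℤ), false)] from rfl,
      show u n = mk [(.inr (n : ℤ), true)] from rfl,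
      head?_toWord_inv_mul_mk_mul false ha hq, head?_toWord_inv_mul_mk_mul true ha hq]
    exact ⟨fun p hp => Option.mem_some_iff.mp hp ▸ hq1, q, rfl, hq1⟩

theorem toWord_iterate_φ_one_c_one_succ (n : ℕ) :
    ((⇑(φ 1))^[n + 1] (c 1)).toWord =
      invRev ((⇑(φ 1))^[n] (c 1)).toWord ++
        (.inr (n : ℤ), false) :: ((⇑(φ 1))^[n] (c 1)).toWord := by
  rw [iterate_φ_one_c_one_succ]
  refine toWord_inv_mul_mk_mul false fun p hp => ?_
  simp [(head?_toWord_iterate_φ_one_c_one n).1 p hp]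

theorem count_u_zero_iterate_φ_one_c_one_succ (n : ℕ) :
    ((⇑(φ 1))^[n + 1] (c 1)).toWord.countP (fun l => l.1 = Sum.inr 0) =
      2 * ((⇑(φ 1))^[n] (c 1)).toWord.countP (fun l => l.1 = Sum.inr 0) +
        if n = 0 then 1 else 0 := by
  rw [toWord_iterate_φ_one_c_one_succ, List.countP_append, List.countP_cons,
    countP_invRev (· = Sum.inr 0)]
  simp only [Sum.inr.injEq, Nat.cast_eq_zero, decide_eq_true_eq]
  ring

theorem stmt_9 (n : ℕ) (hn : 1 ≤ n) :
    (((⇑(φ 1))^[n] (c 1)).toWord.countP (fun l => l.1 = Sum.inr 0)) = 2 ^ (n - 1) := by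
  induction n, hn using Nat.le_induction with
  | base => rw [count_u_zero_iterate_φ_one_c_one_succ]; rfl
  | succ n hn ih =>
    rw [count_u_zero_iterate_φ_one_c_one_succ, ih, if_neg (by omega), add_zero, ← pow_succ',
      Nat.sub_add_cancel hn, Nat.add_sub_cancel]
end

section
/- For D = 1 and every n ≥ 1, the reduced word of φⁿ(c₁) strictly alternates between letters from {c₁, c₁⁻¹} and letters from {u_k, u_k⁻¹ : k ≥ 0}, beginning and ending with a letter from {c₁, c₁⁻¹}. -/
/-! φ acts letter by letter: `c₁^{±1} ↦ c₁⁻¹ u₀^{∓1} c₁`, `u_k^{±1} ↦ u_{k+1}^{±1}`. Applied to a word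
`c₁^± u_{k₁}^± c₁^± ⋯ u_{kₘ}^± c₁^±` with all `kᵢ ≥ 0` this yields a word of the same shape, so
iterating from the one-letter word `c₁` keeps that shape. Adjacent letters of such a word involve different generators, so it is freely
reduced and hence is the reduced word of `φⁿ(c₁)`. -/

namespace FreeGroup

variable {α β : Type*}

def substLetter (σ : α → List (β × Bool)) : α × Bool → List (β × Bool)
  | (a, true) => σ a
  | (a, false) => invRev (σ a)

theorem mk_substLetter (σ : α → List (β × Bool)) (x : α × Bool) :
    mk (substLetter σ x) = lift (fun a => mk (σ a)) (mk [x]) := by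
  obtain ⟨a, _ | _⟩ := x <;> simp [substLetter, lift_mk, inv_mk]

theorem mk_flatMap_substLetter (σ : α → List (β × Bool)) (L : List (α × Bool)) :
    mk (L.flatMap (substLetter σ)) = lift (fun a => mk (σ a)) (mk L) := by
  induction L with
  | nil => simp [← one_eq_mk]
  | cons x L ih =>
    rw [List.flatMap_cons, ← mul_mk, ih, mk_substLetter, ← _root_.map_mul, mul_mk,
      List.singleton_append]

end FreeGroup

open FreeGroup

namespace Tangle

abbrev Letter : Type := (ℤ ⊕ ℤ) × Bool

def subst : ℤ ⊕ ℤ → List Letter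
  | Sum.inl m =>
      if m = 1 then [(Sum.inl 1, false), (Sum.inr 0, false), (Sum.inl 1, true)]
      else [(Sum.inl (m + 1), true)]
  | Sum.inr k => [(Sum.inr (k + 1), true)]

theorem φ_one_eq_lift : φ 1 = lift (fun a => mk (subst a)) := by
  ext (m | k)
  · by_cases hm : m = 1
    · subst hm
      simp [φ, subst, F, c, u, of, inv_mk, mul_mk, invRev]
    · simp [φ, subst, hm, c, of]
  · simp [φ, subst, u, of]

def expand (L : List Letter) : List Letter := L.flatMap (substLetter subst)

theorem iterate_φ_one_c_one (n : ℕ) :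
    (φ 1)^[n] (c 1) = mk (expand^[n] [(Sum.inl 1, true)]) := by
  induction n with
  | zero => rfl
  | succ n ih =>
    rw [Function.iterate_succ_apply', ih, Function.iterate_succ_apply', expand,
      mk_flatMap_substLetter, φ_one_eq_lift]

/-- Words `c₁^± u_{k₁}^± c₁^± ⋯ u_{kₘ}^± c₁^±` with all `kᵢ ≥ 0`. -/
inductive IsAlternating : List Letter → Prop
  | single (b : Bool) : IsAlternating [(Sum.inl 1, b)]
  | cons (b b' : Bool) {k : ℤ} (hk : 0 ≤ k) {L : List Letter} (h : IsAlternating L) :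
      IsAlternating ((Sum.inl 1, b) :: (Sum.inr k, b') :: L)

namespace IsAlternating

variable {L : List Letter}

theorem expand (h : IsAlternating L) : IsAlternating (expand L) := by
  induction h with
  | single b =>
    cases b <;> exact .cons _ _ le_rfl (.single _)
  | cons b b' _ _ ih =>
    cases b <;> cases b' <;>
      simpa [Tangle.expand, substLetter, subst, invRev] using
        .cons _ _ le_rfl (.cons _ _ (by omega) ih)

theorem isReduced (h : IsAlternating L) : IsReduced L := by
  induction h with
  | single _ => exact .singleton
  | cons _ _ _ h ih =>
    refine isReduced_cons_cons.mpr ⟨by simp, ?_⟩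
    cases h <;> simp_all

theorem odd_length (h : IsAlternating L) : Odd L.length := by
  induction h with
  | single _ => exact odd_one
  | cons _ _ _ _ ih => simpa [Nat.odd_add_one] using ih

theorem fst_getElem (h : IsAlternating L) (i : ℕ) (hi : i < L.length) :
    (Even i → L[i].1 = Sum.inl 1) ∧ (¬ Even i → ∃ k : ℤ, 0 ≤ k ∧ L[i].1 = Sum.inr k) := by
  induction h generalizing i with
  | single _ =>
    obtain rfl : i = 0 := by simpa using hi
    simp
  | cons _ _ hk _ ih =>
    rcases i with _ | _ | i
    · simp
    · exact ⟨by simp, fun _ => ⟨_, hk, rfl⟩⟩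
    · simpa [Nat.even_add_one] using ih i (by simpa using hi)

end IsAlternating

theorem isAlternating_iterate_expand (n : ℕ) :
    IsAlternating (expand^[n] [(Sum.inl 1, true)]) := by
  induction n with
  | zero => exact .single true
  | succ n ih => rw [Function.iterate_succ_apply']; exact ih.expand

theorem toWord_iterate_φ_one_c_one (n : ℕ) :
    ((φ 1)^[n] (c 1)).toWord = expand^[n] [(Sum.inl 1, true)] := by
  rw [iterate_φ_one_c_one, toWord_mk, (isAlternating_iterate_expand n).isReduced.reduce_eq]

end Tangle

open Tangle in
theorem stmt_12_general (n : ℕ) :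
    let L := ((⇑(φ 1))^[n] (c 1)).toWord
    Odd L.length ∧
      ∀ i (h : i < L.length),
        (Even i → (L.get ⟨i, h⟩).1 = Sum.inl 1) ∧
        (¬ Even i → ∃ k : ℤ, 0 ≤ k ∧ (L.get ⟨i, h⟩).1 = Sum.inr k) := by
  intro L
  have hL : L = expand^[n] [(Sum.inl 1, true)] := toWord_iterate_φ_one_c_one n
  have halt := isAlternating_iterate_expand n
  rw [hL]
  exact ⟨halt.odd_length, fun i hi => halt.fst_getElem i hi⟩

theorem stmt_12 (n : ℕ) (hn : 1 ≤ n) :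
    let L := ((⇑(φ 1))^[n] (c 1)).toWord
    Odd L.length ∧
      ∀ i (h : i < L.length),
        (Even i → (L.get ⟨i, h⟩).1 = Sum.inl 1) ∧
        (¬ Even i → ∃ k : ℤ, 0 ≤ k ∧ (L.get ⟨i, h⟩).1 = Sum.inr k) :=
  stmt_12_general n
end
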